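/- Let d, q be positive integers, let D be a real d × q matrix, ν ∈ ℝ^d, λ̄ ≥ 0 and γ̄ ≥ 0. Let η₀ ∈ ℝ^d be the (unique) global minimizer of g(η) = (1/2)‖η − ν‖₂² + λ̄‖Dᵀη‖₂. Then η̂ = max(1 − γ̄/‖η₀‖₂, 0) · η₀ (interpreted as 0 when η₀ = 0) is the (unique) global minimizer of f(η) = (1/2)‖η − ν‖₂² + λ̄‖Dᵀη‖₂ + γ̄‖η‖₂. -/

import Mathlib

/-!
A point `x` minimizes `½‖· - w‖² + h` exactly when the residual `w - x` is a subgradient of the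
convex function `h` at `x`, and then `½‖x - w‖² + h x + ½‖y - x‖² ≤ ½‖y - w‖² + h y`, which also
gives uniqueness. If `h` is positively homogeneous, a subgradient of `h` at `x₀` remains one at every
`c • x₀` with `c ≥ 0`; and `x₀ - S_γ x₀` is a subgradient of `γ‖·‖` at the group soft threshold
`S_γ x₀ = max (1 - γ/‖x₀‖) 0 • x₀`. Adding the two, `w - S_γ x₀` is a subgradient of `h + γ‖·‖`
at `S_γ x₀`, i.e. `S_γ x₀` is the minimizer of the fully penalized problem.
-/

/-- Euclidean (ℓ₂) norm of a finitely indexed real vector. -/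
noncomputable def l2norm {ι : Type*} [Fintype ι] (v : ι → ℝ) : ℝ :=
  Real.sqrt (∑ i, (v i) ^ 2)

open Set Filter Topology
open scoped RealInnerProductSpace

lemma l2norm_eq_norm_toLp {ι : Type*} [Fintype ι] (v : ι → ℝ) :
    l2norm v = ‖WithLp.toLp 2 v‖ := by
  simp [l2norm, EuclideanSpace.norm_eq]

lemma nonneg_of_forall_mem_Ioc_nonneg_add_mul {a b : ℝ}
    (h : ∀ t ∈ Ioc (0 : ℝ) 1, 0 ≤ a + t * b) : 0 ≤ a := by
  have hlim : Tendsto (fun t : ℝ => a + t * b) (𝓝[>] 0) (𝓝 a) := by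
    have hcont : Continuous (fun t : ℝ => a + t * b) := by fun_prop
    simpa using (hcont.tendsto 0).mono_left nhdsWithin_le_nhds
  refine ge_of_tendsto hlim ?_
  filter_upwards [Ioc_mem_nhdsGT (zero_lt_one : (0 : ℝ) < 1)] with t ht using h t ht

section Subgradient

variable {E : Type*} [NormedAddCommGroup E] [InnerProductSpace ℝ E]

def HasSubgradientAt (h : E → ℝ) (v x : E) : Prop :=
  ∀ y, ⟪v, y - x⟫ ≤ h y - h x

-- At `x = 0` the factor is `max 1 0` since `γ / 0 = 0`, but the value is `0` all the same.
noncomputable def softThreshold (γ : ℝ) (x : E) : E :=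
  max (1 - γ / ‖x‖) 0 • x

theorem HasSubgradientAt.add {h₁ h₂ : E → ℝ} {v₁ v₂ x : E}
    (hv₁ : HasSubgradientAt h₁ v₁ x) (hv₂ : HasSubgradientAt h₂ v₂ x) :
    HasSubgradientAt (fun y => h₁ y + h₂ y) (v₁ + v₂) x := fun y => by
  rw [inner_add_left]
  linarith [hv₁ y, hv₂ y]

theorem hasSubgradientAt_iff_of_posHomogeneous {h : E → ℝ}
    (hh : ∀ c : ℝ, 0 ≤ c → ∀ y, h (c • y) = c * h y) {v x : E} :
    HasSubgradientAt h v x ↔ (∀ y, ⟪v, y⟫ ≤ h y) ∧ ⟪v, x⟫ = h x := by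
  have h_zero : h 0 = 0 := by simpa using hh 0 le_rfl 0
  constructor
  · intro hv
    have h_le : h x ≤ ⟪v, x⟫ := by simpa [h_zero, inner_neg_right] using hv 0
    have h_ge : ⟪v, x⟫ ≤ h x := by
      have := hv ((2 : ℝ) • x)
      rw [hh 2 zero_le_two, show (2 : ℝ) • x - x = x by module] at this
      linarith
    have h_eq : ⟪v, x⟫ = h x := le_antisymm h_ge h_le
    refine ⟨fun y => ?_, h_eq⟩
    have := hv y
    rw [inner_sub_right] at this
    linarith
  · rintro ⟨h_le, h_eq⟩ y
    rw [inner_sub_right, h_eq]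
    linarith [h_le y]

theorem HasSubgradientAt.smul_of_posHomogeneous {h : E → ℝ}
    (hh : ∀ c : ℝ, 0 ≤ c → ∀ y, h (c • y) = c * h y) {v x : E}
    (hv : HasSubgradientAt h v x) {c : ℝ} (hc : 0 ≤ c) : HasSubgradientAt h v (c • x) := by
  obtain ⟨h_le, h_eq⟩ := (hasSubgradientAt_iff_of_posHomogeneous hh).1 hv
  refine (hasSubgradientAt_iff_of_posHomogeneous hh).2 ⟨h_le, ?_⟩
  rw [inner_smul_right, h_eq, hh c hc]

theorem hasSubgradientAt_norm_softThreshold {γ : ℝ} (hγ : 0 ≤ γ) (x : E) :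
    HasSubgradientAt (fun y => γ * ‖y‖) (x - softThreshold γ x) (softThreshold γ x) := by
  have hhom : ∀ c : ℝ, 0 ≤ c → ∀ y : E, γ * ‖c • y‖ = c * (γ * ‖y‖) := fun c hc y => by
    rw [norm_smul, Real.norm_of_nonneg hc]; ring
  suffices ‖x - softThreshold γ x‖ ≤ γ ∧
      ⟪x - softThreshold γ x, softThreshold γ x⟫ = γ * ‖softThreshold γ x‖ by
    refine (hasSubgradientAt_iff_of_posHomogeneous hhom).2 ⟨fun y => ?_, this.2⟩
    calc ⟪x - softThreshold γ x, y⟫ ≤ ‖x - softThreshold γ x‖ * ‖y‖ := real_inner_le_norm _ _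
      _ ≤ γ * ‖y‖ := by gcongr; exact this.1
  rcases le_or_gt ‖x‖ γ with hx | hx
  · have h_zero : softThreshold γ x = 0 := by
      rcases eq_or_ne x 0 with rfl | hx0
      · simp [softThreshold]
      · have : 1 ≤ γ / ‖x‖ := (one_le_div (norm_pos_iff.2 hx0)).2 hx
        simp [softThreshold, max_eq_right (sub_nonpos.2 this)]
    simp [h_zero, hx]
  · have hx0 : 0 < ‖x‖ := hγ.trans_lt hx
    have hc : 0 ≤ 1 - γ / ‖x‖ := sub_nonneg.2 ((div_le_one hx0).2 hx.le)
    have h_shrink : softThreshold γ x = (1 - γ / ‖x‖) • x := by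
      simp [softThreshold, max_eq_left hc]
    have h_res : x - softThreshold γ x = (γ / ‖x‖) • x := by rw [h_shrink]; module
    rw [h_res, h_shrink, norm_smul, norm_smul, inner_smul_left, inner_smul_right,
      real_inner_self_eq_norm_sq, Real.norm_of_nonneg (div_nonneg hγ hx0.le),
      Real.norm_of_nonneg hc]
    constructor
    · rw [div_mul_cancel₀ _ hx0.ne']
    · simp only [conj_trivial]
      field_simp

theorem HasSubgradientAt.half_norm_sub_sq_add_le {h : E → ℝ} {w x : E}
    (hv : HasSubgradientAt h (w - x) x) (y : E) :
    1 / 2 * ‖x - w‖ ^ 2 + h x + 1 / 2 * ‖y - x‖ ^ 2 ≤ 1 / 2 * ‖y - w‖ ^ 2 + h y := by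
  have h_expand : ‖y - w‖ ^ 2 = ‖y - x‖ ^ 2 - 2 * ⟪w - x, y - x⟫ + ‖x - w‖ ^ 2 := by
    rw [show y - w = (y - x) - (w - x) by abel, norm_sub_sq_real, real_inner_comm, norm_sub_rev w x]
  linarith [hv y]

theorem hasSubgradientAt_of_forall_le {h : E → ℝ} (hconv : ConvexOn ℝ univ h) {w x : E}
    (hmin : ∀ y, 1 / 2 * ‖x - w‖ ^ 2 + h x ≤ 1 / 2 * ‖y - w‖ ^ 2 + h y) :
    HasSubgradientAt h (w - x) x := by
  intro y
  -- Compare `x` with the points `x + t • (y - x)` of the segment towards `y` and let `t → 0⁺`.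
  suffices ∀ t ∈ Ioc (0 : ℝ) 1, 0 ≤ (h y - h x - ⟪w - x, y - x⟫) + t * (1 / 2 * ‖y - x‖ ^ 2) by
    linarith [nonneg_of_forall_mem_Ioc_nonneg_add_mul this]
  rintro t ⟨ht₀, ht₁⟩
  have h_conv : h (x + t • (y - x)) ≤ (1 - t) * h x + t * h y := by
    have := hconv.2 (mem_univ x) (mem_univ y) (sub_nonneg.2 ht₁) ht₀.le (by ring)
    rwa [show (1 - t) • x + t • y = x + t • (y - x) by module, smul_eq_mul, smul_eq_mul] at this
  have h_expand : ‖x + t • (y - x) - w‖ ^ 2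
      = ‖x - w‖ ^ 2 - 2 * t * ⟪w - x, y - x⟫ + t ^ 2 * ‖y - x‖ ^ 2 := by
    rw [show x + t • (y - x) - w = -(w - x) + t • (y - x) by module, norm_add_sq_real,
      inner_smul_right, inner_neg_left, norm_neg, norm_smul, mul_pow, Real.norm_eq_abs, sq_abs,
      norm_sub_rev]
    ring
  have h_le := hmin (x + t • (y - x))
  refine nonneg_of_mul_nonneg_right ?_ ht₀
  nlinarith

theorem hasSubgradientAt_softThreshold_of_forall_le {h : E → ℝ} (hconv : ConvexOn ℝ univ h)
    (hh : ∀ c : ℝ, 0 ≤ c → ∀ y, h (c • y) = c * h y) {γ : ℝ} (hγ : 0 ≤ γ) {w x₀ : E}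
    (hmin : ∀ y, 1 / 2 * ‖x₀ - w‖ ^ 2 + h x₀ ≤ 1 / 2 * ‖y - w‖ ^ 2 + h y) :
    HasSubgradientAt (fun y => h y + γ * ‖y‖) (w - softThreshold γ x₀) (softThreshold γ x₀) := by
  have h_resid := ((hasSubgradientAt_of_forall_le hconv hmin).smul_of_posHomogeneous hh
    (le_max_right (1 - γ / ‖x₀‖) 0)).add (hasSubgradientAt_norm_softThreshold hγ x₀)
  rwa [sub_add_sub_cancel] at h_resid

end Subgradient

theorem prox_soft_threshold_composition_general
    (d q : ℕ)
    (D : Matrix (Fin d) (Fin q) ℝ) (ν : Fin d → ℝ)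
    (lamBar gamBar : ℝ) (hlam : 0 ≤ lamBar) (hgam : 0 ≤ gamBar)
    (f g : (Fin d → ℝ) → ℝ)
    (hf : ∀ η, f η = (1 / 2) * (l2norm (fun i => η i - ν i)) ^ 2
        + lamBar * l2norm (D.transpose.mulVec η) + gamBar * l2norm η)
    (hg : ∀ η, g η = (1 / 2) * (l2norm (fun i => η i - ν i)) ^ 2
        + lamBar * l2norm (D.transpose.mulVec η))
    (η₀ : Fin d → ℝ) (hη₀ : ∀ η, g η₀ ≤ g η)
    (ηhat : Fin d → ℝ)
    (hηhat : ηhat = max (1 - gamBar / l2norm η₀) 0 • η₀) :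
    (∀ η, f ηhat ≤ f η) ∧ (∀ η, (∀ η', f η ≤ f η') → η = ηhat) := by
  let T : (Fin d → ℝ) → EuclideanSpace ℝ (Fin d) := WithLp.toLp 2
  let p : Seminorm ℝ (EuclideanSpace ℝ (Fin d)) :=
    (normSeminorm ℝ (EuclideanSpace ℝ (Fin q))).comp (Matrix.toLpLin 2 2 D.transpose)
  let h : EuclideanSpace ℝ (Fin d) → ℝ := fun x => lamBar * p x
  have h_fid : ∀ η, l2norm (fun i => η i - ν i) = ‖T η - T ν‖ := fun η => by
    rw [l2norm_eq_norm_toLp]; rfl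
  have h_pen : ∀ η, lamBar * l2norm (D.transpose.mulVec η) = h (T η) := fun η => by
    rw [l2norm_eq_norm_toLp]; rfl
  have hg' : ∀ η, g η = 1 / 2 * ‖T η - T ν‖ ^ 2 + h (T η) := fun η => by
    rw [hg, h_fid, h_pen]
  have hf' : ∀ η, f η = 1 / 2 * ‖T η - T ν‖ ^ 2 + (h (T η) + gamBar * ‖T η‖) := fun η => by
    rw [hf, h_fid, h_pen, l2norm_eq_norm_toLp, add_assoc]
  have hT : T ηhat = softThreshold gamBar (T η₀) := by
    rw [hηhat, l2norm_eq_norm_toLp]; rfl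
  have h_hom : ∀ c : ℝ, 0 ≤ c → ∀ x, h (c • x) = c * h x := fun c hc x => by
    simp only [h, map_smul_eq_mul, Real.norm_of_nonneg hc]; ring
  have h_conv : ConvexOn ℝ univ h := p.convexOn.smul hlam
  have h_sub := hasSubgradientAt_softThreshold_of_forall_le h_conv h_hom hgam
    (fun x => by simpa only [hg', T, WithLp.toLp_ofLp] using hη₀ (WithLp.ofLp x))
  rw [← hT] at h_sub
  have h_bound : ∀ η, f ηhat + 1 / 2 * ‖T η - T ηhat‖ ^ 2 ≤ f η := fun η => by
    linarith [hf' η, hf' ηhat, h_sub.half_norm_sub_sq_add_le (T η)]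
  refine ⟨fun η => by linarith [h_bound η, sq_nonneg ‖T η - T ηhat‖], fun η hη => ?_⟩
  have h_dist : ‖T η - T ηhat‖ ^ 2 ≤ 0 := by linarith [h_bound η, hη ηhat]
  exact WithLp.toLp_injective 2 (norm_sub_eq_zero_iff.1 ((sq_nonpos_iff _).1 h_dist))

/-- Group-soft-thresholding composition: if `η₀` globally minimizes
`g(η) = (1/2)‖η − ν‖₂² + λ̄‖Dᵀη‖₂`, then
`η̂ = max(1 − γ̄/‖η₀‖₂, 0)·η₀` is the unique global minimizer of
`f(η) = (1/2)‖η − ν‖₂² + λ̄‖Dᵀη‖₂ + γ̄‖η‖₂`. -/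
theorem prox_soft_threshold_composition
    (d q : ℕ) (hd : 0 < d) (hq : 0 < q)
    (D : Matrix (Fin d) (Fin q) ℝ) (ν : Fin d → ℝ)
    (lamBar gamBar : ℝ) (hlam : 0 ≤ lamBar) (hgam : 0 ≤ gamBar)
    (f g : (Fin d → ℝ) → ℝ)
    (hf : ∀ η, f η = (1 / 2) * (l2norm (fun i => η i - ν i)) ^ 2
        + lamBar * l2norm (D.transpose.mulVec η) + gamBar * l2norm η)
    (hg : ∀ η, g η = (1 / 2) * (l2norm (fun i => η i - ν i)) ^ 2
        + lamBar * l2norm (D.transpose.mulVec η))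
    (η₀ : Fin d → ℝ) (hη₀ : ∀ η, g η₀ ≤ g η)
    (ηhat : Fin d → ℝ)
    (hηhat : ηhat = max (1 - gamBar / l2norm η₀) 0 • η₀) :
    (∀ η, f ηhat ≤ f η) ∧ (∀ η, (∀ η', f η ≤ f η') → η = ηhat) :=
  prox_soft_threshold_composition_general d q D ν lamBar gamBar hlam hgam f g hf hg η₀ hη₀ ηhat
    hηhat
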